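/- arXiv:1204.1856 — 2 statements merged into one kernel-verified Lean document; each statement's English description precedes it below -/
import Mathlib

section
/- Under (H1) and (H2), for every partition Δ: 0=t₀<⋯<t_N=T and every interior node t_k (1 ≤ k ≤ N−1), the jump of P^Δ at t_k is nonnegative; more precisely, ΔP^Δ(t_k) := P^Δ(t_k+0)−P^Δ(t_k−0) = Φ^Δ(T;t_k)ᵀ[G(t_k)−G(t_{k−1})]Φ^Δ(T;t_k) + ∫_{t_k}^T [Φ^Δ(s;t_k)ᵀ(Q(t_k,s)−Q(t_{k−1},s))Φ^Δ(s;t_k) + Ψ^Δ(s;t_k)ᵀ(R(t_k,s)−R(t_{k−1},s))Ψ^Δ(s;t_k)] ds, which is a positive semidefinite matrix. -/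
/-!
Along the closed-loop fundamental solution `Φ = Φ^Δ(·; t_k)`, the frozen Riccati equation on
the cell `(t_k, t_{k+1})` makes `Φᵀ P^Δ Φ` decrease at the rate of the running cost
`Φᵀ Q(t_k, ·) Φ + Ψᵀ R(t_k, ·) Ψ`. Integrating over the cell, inserting the prescribed left limit
at `t_{k+1}` and using the cocycle identity `Φ^Δ(s; t_k) = Φ^Δ(s; t_{k+1}) Φ^Δ(t_{k+1}; t_k)`
shows that `P^Δ(t_k + 0) = P^Δ(t_k)` is the cost matrix along `Φ^Δ(·; t_k)` with all weights
frozen at `t_k`, whereas `P^Δ(t_k - 0)` is the same cost with weights frozen at `t_{k-1}`. The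
jump is therefore the cost matrix of the weight increments, positive semidefinite by (H2).

The analytic input is the regularity of the Volterra equation defining `Φ^Δ`: by Gronwall's
inequality its solutions are bounded and continuous, so every integrand above is integrable.
-/

open Set Matrix MeasureTheory

attribute [local instance] Matrix.normedAddCommGroup Matrix.normedSpace

/-- `tp` enumerates a partition `Δ : 0 = t₀ < t₁ < ⋯ < t_N = T` of `[0,T]`. -/
def IsPartition (T : ℝ) (N : ℕ) (tp : ℕ → ℝ) : Prop :=
  0 < N ∧ tp 0 = 0 ∧ tp N = T ∧ ∀ k < N, tp k < tp (k + 1)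

/-- `AΔ, BΔ, QΔ, RΔ` are the piecewise frozen coefficients of `A, B, Q, R`
associated with the partition `tp` (freezing the first variable at `t_{k-1}`). -/
def IsFrozen (n m : ℕ) (N : ℕ) (tp : ℕ → ℝ)
    (A : ℝ → ℝ → Matrix (Fin n) (Fin n) ℝ) (B : ℝ → ℝ → Matrix (Fin n) (Fin m) ℝ)
    (Q : ℝ → ℝ → Matrix (Fin n) (Fin n) ℝ) (R : ℝ → ℝ → Matrix (Fin m) (Fin m) ℝ)
    (AΔ : ℝ → Matrix (Fin n) (Fin n) ℝ) (BΔ : ℝ → Matrix (Fin n) (Fin m) ℝ)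
    (QΔ : ℝ → Matrix (Fin n) (Fin n) ℝ) (RΔ : ℝ → Matrix (Fin m) (Fin m) ℝ) : Prop :=
  ∀ k < N, ∀ s ∈ Ico (tp k) (tp (k + 1)),
    AΔ s = A (tp k) s ∧ BΔ s = B (tp k) s ∧ QΔ s = Q (tp k) s ∧ RΔ s = R (tp k) s

/-- `PΔ` (together with the closed-loop fundamental solutions `Φ k = Φ^Δ(·;t_k)`)
is the piecewise Riccati function characterizing the equilibrium of Problem (LQ^Δ):
it is right-continuous on each `[t_{k-1},t_k)` and solves the Riccati ODE on each
`(t_{k-1},t_k)`, with `P^Δ(T) = G(t_{N-1})` and left limits at each node `t_k`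
(`1 ≤ k ≤ N`) given by
`P^Δ(t_k−0) = Φ^Δ(T;t_k)ᵀG(t_{k−1})Φ^Δ(T;t_k) + ∫_{t_k}^T [Φ^ΔᵀQ(t_{k−1},·)Φ^Δ + Ψ^ΔᵀR(t_{k−1},·)Ψ^Δ]`,
where `Φ^Δ(·;t_k)` solves `∂_sΦ = [A^Δ − B^Δ(R^Δ)⁻¹(B^Δ)ᵀP^Δ]Φ`, `Φ(t_k;t_k) = I`
(in Volterra integral form) and `Ψ^Δ(s;t_k) = −R^Δ(s)⁻¹B^Δ(s)ᵀP^Δ(s)Φ^Δ(s;t_k)`. -/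
noncomputable def IsPiecewiseRiccati (n m : ℕ) (N : ℕ) (T : ℝ) (tp : ℕ → ℝ)
    (Q : ℝ → ℝ → Matrix (Fin n) (Fin n) ℝ) (R : ℝ → ℝ → Matrix (Fin m) (Fin m) ℝ)
    (G : ℝ → Matrix (Fin n) (Fin n) ℝ)
    (AΔ : ℝ → Matrix (Fin n) (Fin n) ℝ) (BΔ : ℝ → Matrix (Fin n) (Fin m) ℝ)
    (QΔ : ℝ → Matrix (Fin n) (Fin n) ℝ) (RΔ : ℝ → Matrix (Fin m) (Fin m) ℝ)
    (PΔ : ℝ → Matrix (Fin n) (Fin n) ℝ) (Φ : ℕ → ℝ → Matrix (Fin n) (Fin n) ℝ) :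
    Prop :=
  (∀ k < N, ContinuousOn PΔ (Ico (tp k) (tp (k + 1)))) ∧
  PΔ T = G (tp (N - 1)) ∧
  (∀ k < N, ∀ s ∈ Ioo (tp k) (tp (k + 1)),
    HasDerivAt PΔ
      (-(PΔ s * AΔ s + (AΔ s)ᵀ * PΔ s + QΔ s
          - PΔ s * BΔ s * (RΔ s)⁻¹ * (BΔ s)ᵀ * PΔ s)) s) ∧
  (∀ k ≤ N, ∀ s ∈ Icc (tp k) T,
    Φ k s = 1 + ∫ r in (tp k)..s,
      (AΔ r - BΔ r * (RΔ r)⁻¹ * (BΔ r)ᵀ * PΔ r) * Φ k r) ∧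
  (∀ k, 1 ≤ k → k ≤ N →
    Filter.Tendsto PΔ (nhdsWithin (tp k) (Iio (tp k))) (nhds
      ((Φ k T)ᵀ * G (tp (k - 1)) * Φ k T
        + ∫ s in (tp k)..T,
            ((Φ k s)ᵀ * Q (tp (k - 1)) s * Φ k s
              + ((RΔ s)⁻¹ * (BΔ s)ᵀ * PΔ s * Φ k s)ᵀ * R (tp (k - 1)) s
                  * ((RΔ s)⁻¹ * (BΔ s)ᵀ * PΔ s * Φ k s)))))

open Filter Topology intervalIntegral Real

section

/-- With the sup-norm instances, the norm topology is not reducibly the `Matrix` topology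
instance, so `ContinuousENorm` (hence integrability) is not found on matrices; declaring the
product topology as a reducible instance restores the identification. -/
local instance matrixPiTopology {l p : Type*} : TopologicalSpace (Matrix l p ℝ) :=
  Pi.topologicalSpace

theorem le_mul_exp_of_le_add_mul_integral {φ : ℝ → ℝ} {a b c K : ℝ} (hK : 0 ≤ K)
    (hφ : ContinuousOn φ (Icc a b)) (h : ∀ t ∈ Icc a b, φ t ≤ c + K * ∫ s in a..t, φ s) :
    ∀ t ∈ Icc a b, φ t ≤ c * exp (K * (t - a)) := by
  rcases lt_or_ge b a with hba | hab
  · simp [Icc_eq_empty_of_lt hba]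
  have hφi : IntegrableOn φ (uIcc a b) := by
    rw [uIcc_of_le hab]; exact hφ.integrableOn_Icc
  set v : ℝ → ℝ := fun t => c + K * ∫ s in a..t, φ s
  have hv : ContinuousOn v (Icc a b) := by
    have := continuousOn_primitive_interval hφi
    rw [uIcc_of_le hab] at this
    exact continuousOn_const.add (continuousOn_const.mul this)
  have hv' : ∀ t ∈ Ico a b, HasDerivWithinAt v (K * φ t) (Ici t) t := by
    intro t ht
    have hnhds : Icc a b ∈ 𝓝[>] t :=
      mem_of_superset (Ioo_mem_nhdsGT ht.2) fun s hs => ⟨ht.1.trans hs.1.le, hs.2.le⟩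
    have hφt : ContinuousWithinAt φ (Ioi t) t :=
      (hφ t (Ico_subset_Icc_self ht)).mono_of_mem_nhdsWithin hnhds
    have hmeas : StronglyMeasurableAtFilter φ (𝓝[>] t) :=
      ⟨_, hnhds, hφ.aestronglyMeasurable measurableSet_Icc⟩
    have hint : IntervalIntegrable φ volume a t :=
      hφi.intervalIntegrable.mono_set (by
        rw [uIcc_of_le ht.1, uIcc_of_le hab]; exact Icc_subset_Icc_right ht.2.le)
    exact ((integral_hasDerivWithinAt_right hint hmeas hφt).const_mul K).const_add c
  intro t ht
  calc φ t ≤ v t := h t ht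
    _ ≤ gronwallBound c K 0 (t - a) :=
        le_gronwallBound_of_liminf_deriv_right_le hv
          (fun x hx r hr => (hv' x hx).liminf_right_slope_le hr) (by simp [v])
          (fun x hx => by
            simpa using mul_le_mul_of_nonneg_left (h x (Ico_subset_Icc_self hx)) hK) t ht
    _ = c * exp (K * (t - a)) := gronwallBound_ε0 _ _ _

section MatrixCalculus

variable {l m p : Type*} [Fintype l] [Fintype m] [Fintype p]

theorem norm_matrix_mul_le (A : Matrix l m ℝ) (B : Matrix m p ℝ) :
    ‖A * B‖ ≤ Fintype.card m * ‖A‖ * ‖B‖ := by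
  refine (Matrix.norm_le_iff (by positivity)).2 fun i j => ?_
  calc ‖(A * B) i j‖ ≤ ∑ k, ‖A i k‖ * ‖B k j‖ := by
        rw [Matrix.mul_apply]
        exact (norm_sum_le _ _).trans_eq (by simp only [norm_mul])
    _ ≤ ∑ _k : m, ‖A‖ * ‖B‖ := by
        gcongr <;> exact norm_entry_le_entrywise_sup_norm _
    _ = Fintype.card m * ‖A‖ * ‖B‖ := by simp [mul_assoc]

variable (l m p) in
noncomputable def matrixMulCLM : Matrix l m ℝ →L[ℝ] Matrix m p ℝ →L[ℝ] Matrix l p ℝ :=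
  LinearMap.toContinuousLinearMap
    (LinearMap.toContinuousLinearMap.toLinearMap ∘ₗ mulLinearMap ℝ)

theorem HasDerivAt.matrix_mul {f : ℝ → Matrix l m ℝ} {g : ℝ → Matrix m p ℝ} {f' g'} {x : ℝ}
    (hf : HasDerivAt f f' x) (hg : HasDerivAt g g' x) :
    HasDerivAt (fun t => f t * g t) (f' * g x + f x * g') x := by
  rw [add_comm]
  exact (matrixMulCLM l m p).hasDerivAt_of_bilinear (fun _ => hf) (fun _ => hg)

variable (l m) in
noncomputable def matrixTransposeCLM : Matrix l m ℝ →L[ℝ] Matrix m l ℝ :=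
  LinearMap.toContinuousLinearMap (transposeLinearEquiv l m ℝ ℝ).toLinearMap

@[simp] theorem matrixTransposeCLM_apply (A : Matrix l m ℝ) : matrixTransposeCLM l m A = Aᵀ := rfl

theorem HasDerivAt.matrix_transpose {f : ℝ → Matrix l m ℝ} {f'} {x : ℝ}
    (hf : HasDerivAt f f' x) : HasDerivAt (fun t => (f t)ᵀ) f'ᵀ x :=
  (matrixTransposeCLM l m).hasFDerivAt.comp_hasDerivAt x hf

theorem IntervalIntegrable.matrix_const_mul {f : ℝ → Matrix m p ℝ} {a b : ℝ}
    (hf : IntervalIntegrable f volume a b) (A : Matrix l m ℝ) :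
    IntervalIntegrable (fun s => A * f s) volume a b :=
  ⟨(matrixMulCLM l m p A).integrable_comp hf.1, (matrixMulCLM l m p A).integrable_comp hf.2⟩

theorem IntervalIntegrable.matrix_mul_const {f : ℝ → Matrix l m ℝ} {a b : ℝ}
    (hf : IntervalIntegrable f volume a b) (B : Matrix m p ℝ) :
    IntervalIntegrable (fun s => f s * B) volume a b :=
  ⟨((matrixMulCLM l m p).flip B).integrable_comp hf.1,
    ((matrixMulCLM l m p).flip B).integrable_comp hf.2⟩

theorem intervalIntegral_matrix_const_mul {f : ℝ → Matrix m p ℝ} {a b : ℝ}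
    (hf : IntervalIntegrable f volume a b) (A : Matrix l m ℝ) :
    ∫ s in a..b, A * f s = A * ∫ s in a..b, f s :=
  (matrixMulCLM l m p A).intervalIntegral_comp_comm hf

theorem intervalIntegral_matrix_mul_const {f : ℝ → Matrix l m ℝ} {a b : ℝ}
    (hf : IntervalIntegrable f volume a b) (B : Matrix m p ℝ) :
    ∫ s in a..b, f s * B = (∫ s in a..b, f s) * B :=
  ((matrixMulCLM l m p).flip B).intervalIntegral_comp_comm hf

theorem integrableOn_Ioo_matrix_mul {f : ℝ → Matrix l m ℝ} {g : ℝ → Matrix m p ℝ} {a b K M : ℝ}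
    (hf : AEStronglyMeasurable f (volume.restrict (Ioo a b)))
    (hg : AEStronglyMeasurable g (volume.restrict (Ioo a b)))
    (hfK : ∀ r ∈ Ioo a b, ‖f r‖ ≤ K) (hgM : ∀ r ∈ Ioo a b, ‖g r‖ ≤ M) :
    IntegrableOn (fun r => f r * g r) (Ioo a b) := by
  refine .of_bound measure_Ioo_lt_top
    ((continuous_fst.matrix_mul continuous_snd).comp_aestronglyMeasurable₂ hf hg)
    (Fintype.card m * K * M) (ae_restrict_of_forall_mem measurableSet_Ioo fun r hr => ?_)
  have hK : 0 ≤ K := (norm_nonneg _).trans (hfK r hr)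
  calc ‖f r * g r‖ ≤ Fintype.card m * ‖f r‖ * ‖g r‖ := norm_matrix_mul_le _ _
    _ ≤ Fintype.card m * K * M := by gcongr; exacts [hfK r hr, hgM r hr]

theorem ContinuousOn.matrix_inv {X ι : Type*} [TopologicalSpace X] [Fintype ι] [DecidableEq ι]
    {f : X → Matrix ι ι ℝ} {s : Set X} (hf : ContinuousOn f s)
    (hdet : ∀ x ∈ s, IsUnit (f x).det) : ContinuousOn (fun x => (f x)⁻¹) s := fun x hx =>
  (continuousAt_matrix_inv _
    (NormedRing.inverse_continuousAt (hdet x hx).unit)).comp_continuousWithinAt (hf x hx)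

theorem Matrix.PosSemidef.posDef_of_sub_smul_one {ι : Type*} [Fintype ι] [DecidableEq ι]
    {M : Matrix ι ι ℝ} {δ : ℝ} (hδ : 0 < δ) (h : (M - δ • (1 : Matrix ι ι ℝ)).PosSemidef) :
    M.PosDef := by
  have hδ1 : (δ • (1 : Matrix ι ι ℝ)).PosDef := by
    rw [smul_one_eq_diagonal]
    exact PosDef.diagonal fun _ => hδ
  simpa using PosDef.posSemidef_add h hδ1

end MatrixCalculus

section Volterra

variable {ι κ : Type*} [Fintype ι] [Fintype κ] {C : ℝ → Matrix ι ι ℝ} {Φ : ℝ → Matrix ι κ ℝ}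
  {X₀ : Matrix ι κ ℝ} {a b K : ℝ}

theorem continuousOn_of_volterra (hab : a ≤ b)
    (hint : IntervalIntegrable (fun r => C r * Φ r) volume a b)
    (hΦ : ∀ s ∈ Icc a b, Φ s = X₀ + ∫ r in a..s, C r * Φ r) :
    ContinuousOn Φ (Icc a b) := by
  have := continuousOn_primitive_interval
    ((intervalIntegrable_iff_integrableOn_Icc_of_le hab).1 hint |>.mono_set (uIcc_of_le hab).le)
  rw [uIcc_of_le hab] at this
  exact (continuousOn_const.add this).congr hΦ

theorem hasDerivAt_of_volterra (hint : IntervalIntegrable (fun r => C r * Φ r) volume a b)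
    (hΦ : ∀ s ∈ Icc a b, Φ s = X₀ + ∫ r in a..s, C r * Φ r) {t : ℝ} (ht : t ∈ Ioo a b)
    (hCt : ContinuousAt C t) (hΦt : ContinuousAt Φ t) :
    HasDerivAt Φ (C t * Φ t) t := by
  have hint_t : IntervalIntegrable (fun r => C r * Φ r) volume a t :=
    hint.mono_set (by rw [uIcc_of_le ht.1.le, uIcc_of_le (ht.1.trans ht.2).le]
                      exact Icc_subset_Icc_right ht.2.le)
  have hmeas : StronglyMeasurableAtFilter (fun r => C r * Φ r) (𝓝 t) :=
    ⟨Ioo a b, Ioo_mem_nhds ht.1 ht.2,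
      (hint.1.mono_set Ioo_subset_Ioc_self).aestronglyMeasurable⟩
  refine ((integral_hasDerivAt_right hint_t hmeas (by fun_prop)).const_add X₀).congr_of_eventuallyEq
    ?_
  filter_upwards [Icc_mem_nhds ht.1 ht.2] with s hs using hΦ s hs

theorem norm_le_of_volterra (hK : 0 ≤ K) (hC : ∀ r ∈ Ioo a b, ‖C r‖ ≤ K)
    (hΦc : ContinuousOn Φ (Icc a b)) (hΦ : ∀ s ∈ Icc a b, Φ s = X₀ + ∫ r in a..s, C r * Φ r) :
    ∀ t ∈ Icc a b, ‖Φ t‖ ≤ ‖X₀‖ * exp (Fintype.card ι * K * (t - a)) := by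
  refine le_mul_exp_of_le_add_mul_integral (by positivity) (continuous_norm.comp_continuousOn hΦc)
    fun t ht => ?_
  have hnorm : IntervalIntegrable (fun r => ‖Φ r‖) volume a t :=
    ((continuous_norm.comp_continuousOn hΦc).mono
      (Icc_subset_Icc_right ht.2)).intervalIntegrable_of_Icc ht.1
  have hbound : ‖∫ r in a..t, C r * Φ r‖ ≤ ∫ r in a..t, Fintype.card ι * K * ‖Φ r‖ := by
    refine norm_integral_le_of_norm_le ht.1 ?_ (hnorm.const_mul _)
    filter_upwards [volume.ae_ne t] with r hrt hr
    calc ‖C r * Φ r‖ ≤ Fintype.card ι * ‖C r‖ * ‖Φ r‖ := norm_matrix_mul_le _ _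
      _ ≤ Fintype.card ι * K * ‖Φ r‖ := by
          gcongr; exact hC r ⟨hr.1, (lt_of_le_of_ne hr.2 hrt).trans_le ht.2⟩
  calc ‖Φ t‖ ≤ ‖X₀‖ + ‖∫ r in a..t, C r * Φ r‖ := by rw [hΦ t ht]; exact norm_add_le _ _
    _ ≤ _ := by rw [intervalIntegral.integral_const_mul] at hbound; linarith

theorem intervalIntegrable_of_volterra (hab : a ≤ b) (hK : 0 ≤ K)
    (hCm : AEStronglyMeasurable C (volume.restrict (Ioo a b))) (hC : ∀ r ∈ Ioo a b, ‖C r‖ ≤ K)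
    (hΦ : ∀ s ∈ Icc a b, Φ s = X₀ + ∫ r in a..s, C r * Φ r) :
    IntervalIntegrable (fun r => C r * Φ r) volume a b := by
  set S := {s | s ∈ Icc a b ∧ IntervalIntegrable (fun r => C r * Φ r) volume a s}
  have haS : a ∈ S := ⟨⟨le_rfl, hab⟩, .refl⟩
  have hSb : BddAbove S := ⟨b, fun s hs => hs.1.2⟩
  set c := sSup S
  have hc : c ∈ Icc a b := ⟨le_csSup hSb haS, csSup_le ⟨a, haS⟩ fun s hs => hs.1.2⟩
  have hCm' : ∀ {u v}, a ≤ u → v ≤ b → AEStronglyMeasurable C (volume.restrict (Ioo u v)) :=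
    fun hu hv => hCm.mono_measure (Measure.restrict_mono (Ioo_subset_Ioo hu hv) le_rfl)
  set M := ‖X₀‖ * exp (Fintype.card ι * K * (b - a))
  have hS : ∀ s ∈ S, ContinuousOn Φ (Icc a s) ∧ ∀ t ∈ Icc a s, ‖Φ t‖ ≤ M := by
    rintro s ⟨hs, hint⟩
    have hΦs : ∀ t ∈ Icc a s, Φ t = X₀ + ∫ r in a..t, C r * Φ r :=
      fun t ht => hΦ t ⟨ht.1, ht.2.trans hs.2⟩
    have hcont := continuousOn_of_volterra hs.1 hint hΦs
    refine ⟨hcont, fun t ht => (norm_le_of_volterra hK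
      (fun r hr => hC r ⟨hr.1, hr.2.trans_le hs.2⟩) hcont hΦs t ht).trans ?_⟩
    simp only [M]
    gcongr
    exact ht.2.trans hs.2
  -- below `c` the equation is non-degenerate; above `c` the integral is junk and `Φ = X₀`
  have hleft : IntegrableOn (fun r => C r * Φ r) (Ioo a c) := by
    have hloc : ∀ t ∈ Ioo a c, ∃ s ∈ S, t < s := fun t ht => exists_lt_of_lt_csSup ⟨a, haS⟩ ht.2
    have hcont : ContinuousOn Φ (Ioo a c) := fun t ht => by
      obtain ⟨s, hs, hts⟩ := hloc t ht
      exact ((hS s hs).1.continuousAt (Icc_mem_nhds ht.1 hts)).continuousWithinAt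
    refine integrableOn_Ioo_matrix_mul (M := M) (hCm' le_rfl hc.2)
      (hcont.aestronglyMeasurable measurableSet_Ioo)
      (fun r hr => hC r ⟨hr.1, hr.2.trans_le hc.2⟩) fun r hr => ?_
    obtain ⟨s, hs, hrs⟩ := hloc r hr
    exact (hS s hs).2 r ⟨hr.1.le, hrs.le⟩
  have hright : IntegrableOn (fun r => C r * Φ r) (Ioo c b) := by
    have hconst : ∀ r ∈ Ioo c b, Φ r = X₀ := fun r hr => by
      have hrS : r ∉ S := fun h => (le_csSup hSb h).not_gt hr.1
      rw [hΦ r ⟨hc.1.trans hr.1.le, hr.2.le⟩,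
        integral_undef fun h => hrS ⟨⟨hc.1.trans hr.1.le, hr.2.le⟩, h⟩, add_zero]
    refine (integrableOn_Ioo_matrix_mul (g := fun _ => X₀) (hCm' hc.1 le_rfl)
      aestronglyMeasurable_const (fun r hr => hC r ⟨hc.1.trans_lt hr.1, hr.2⟩)
      fun _ _ => le_rfl).congr_fun (fun r hr => by rw [hconst r hr]) measurableSet_Ioo
  exact ((intervalIntegrable_iff_integrableOn_Ioo_of_le hc.1).2 hleft).trans
    ((intervalIntegrable_iff_integrableOn_Ioo_of_le hc.2).2 hright)

theorem eq_mul_of_volterra [DecidableEq ι] {Φ₂ : ℝ → Matrix ι ι ℝ} {c : ℝ} (hab : a ≤ b)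
    (hbc : b ≤ c) (hK : 0 ≤ K) (hC : ∀ r ∈ Ioo b c, ‖C r‖ ≤ K)
    (h₁ : IntervalIntegrable (fun r => C r * Φ r) volume a c)
    (hΦ : ∀ s ∈ Icc a c, Φ s = X₀ + ∫ r in a..s, C r * Φ r)
    (h₂ : IntervalIntegrable (fun r => C r * Φ₂ r) volume b c)
    (hΦ₂ : ∀ s ∈ Icc b c, Φ₂ s = 1 + ∫ r in b..s, C r * Φ₂ r) :
    ∀ s ∈ Icc b c, Φ s = Φ₂ s * Φ b := by
  set D := fun s => Φ s - Φ₂ s * Φ b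
  have hDc : ContinuousOn D (Icc b c) :=
    ((continuousOn_of_volterra (hab.trans hbc) h₁ hΦ).mono (Icc_subset_Icc_left hab)).sub
      (by have := continuousOn_of_volterra hbc h₂ hΦ₂; fun_prop)
  have hD : ∀ s ∈ Icc b c, D s = 0 + ∫ r in b..s, C r * D r := by
    intro s hs
    have hint₀ : IntervalIntegrable (fun r => C r * Φ r) volume a b :=
      h₁.mono_set (by
        rw [uIcc_of_le hab, uIcc_of_le (hab.trans hbc)]; exact Icc_subset_Icc_right hbc)
    have hint₁ : IntervalIntegrable (fun r => C r * Φ r) volume b s :=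
      h₁.mono_set (by
        rw [uIcc_of_le hs.1, uIcc_of_le (hab.trans hbc)]; exact Icc_subset_Icc hab hs.2)
    have hint₂ : IntervalIntegrable (fun r => C r * Φ₂ r) volume b s :=
      h₂.mono_set (uIcc_subset_uIcc (by simp [hbc]) (by rw [uIcc_of_le hbc]; exact hs))
    have hΦs : Φ s = Φ b + ∫ r in b..s, C r * Φ r := by
      rw [hΦ s ⟨hab.trans hs.1, hs.2⟩, hΦ b ⟨hab, hbc⟩, add_assoc,
        integral_add_adjacent_intervals hint₀ hint₁]
    have hΦ₂s : Φ₂ s * Φ b = Φ b + ∫ r in b..s, C r * Φ₂ r * Φ b := by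
      rw [hΦ₂ s hs, Matrix.add_mul, Matrix.one_mul, intervalIntegral_matrix_mul_const hint₂]
    simp only [D, zero_add, Matrix.mul_sub, ← Matrix.mul_assoc]
    rw [integral_sub hint₁ (hint₂.matrix_mul_const _), hΦs, hΦ₂s]
    abel
  intro s hs
  simpa [D, sub_eq_zero] using norm_le_of_volterra hK hC hDc hD s hs

end Volterra

section LQCost

variable {ι μ κ : Type*} [Fintype ι] [Fintype μ] [Fintype κ]

noncomputable def quadFormCLM (x : κ → ℝ) : Matrix κ κ ℝ →L[ℝ] ℝ :=
  LinearMap.toContinuousLinearMap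
    { toFun := fun M => x ⬝ᵥ M *ᵥ x
      map_add' := fun M N => by simp [Matrix.add_mulVec, dotProduct_add]
      map_smul' := fun r M => by simp [Matrix.smul_mulVec, dotProduct_smul] }

@[simp] theorem quadFormCLM_apply (x : κ → ℝ) (M : Matrix κ κ ℝ) :
    quadFormCLM x M = x ⬝ᵥ M *ᵥ x := rfl

theorem posSemidef_intervalIntegral {F : ℝ → Matrix κ κ ℝ} {a b : ℝ} (hab : a ≤ b)
    (hF : ∀ s ∈ Ioo a b, (F s).PosSemidef) : (∫ s in a..b, F s).PosSemidef := by
  by_cases hint : IntervalIntegrable F volume a b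
  swap
  · rw [integral_undef hint]; exact .zero
  have hae : ∀ᵐ s, s ∈ uIoc a b → (F s).PosSemidef := by
    filter_upwards [volume.ae_ne b] with s hsb hs
    rw [uIoc_of_le hab] at hs
    exact hF s ⟨hs.1, lt_of_le_of_ne hs.2 hsb⟩
  refine .of_dotProduct_mulVec_nonneg ?_ fun x => ?_
  · rw [IsHermitian, conjTranspose_eq_transpose_of_trivial]
    refine ((matrixTransposeCLM κ κ).intervalIntegral_comp_comm hint).symm.trans (integral_congr_ae (hae.mono fun s hs hs' => ?_))
    simpa [IsHermitian, conjTranspose_eq_transpose_of_trivial] using (hs hs').isHermitian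
  · rw [star_trivial]
    refine le_of_le_of_eq ?_ ((quadFormCLM x).intervalIntegral_comp_comm hint)
    refine integral_nonneg_of_ae_restrict hab ?_
    filter_upwards [ae_restrict_mem measurableSet_Icc, ae_restrict_of_ae (volume.ae_ne a),
      ae_restrict_of_ae (volume.ae_ne b)] with s hs hsa hsb
    simpa using
      (hF s ⟨lt_of_le_of_ne hs.1 hsa.symm, lt_of_le_of_ne hs.2 hsb⟩).dotProduct_mulVec_nonneg x

def quadCost (Q : ℝ → Matrix ι ι ℝ) (R : ℝ → Matrix μ μ ℝ) (Φ : ℝ → Matrix ι κ ℝ)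
    (Ψ : ℝ → Matrix μ κ ℝ) (s : ℝ) : Matrix κ κ ℝ :=
  (Φ s)ᵀ * Q s * Φ s + (Ψ s)ᵀ * R s * Ψ s

/-- `xᵀ (lqCost G Q R Φ Ψ a b) x` is the cost on `[a, b]` of the state `Φ · x` under the
control `Ψ · x`, with terminal weight `G`. -/
noncomputable def lqCost (G : Matrix ι ι ℝ) (Q : ℝ → Matrix ι ι ℝ) (R : ℝ → Matrix μ μ ℝ)
    (Φ : ℝ → Matrix ι κ ℝ) (Ψ : ℝ → Matrix μ κ ℝ) (a b : ℝ) : Matrix κ κ ℝ :=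
  (Φ b)ᵀ * G * Φ b + ∫ s in a..b, quadCost Q R Φ Ψ s

variable {G G' : Matrix ι ι ℝ} {Q Q' : ℝ → Matrix ι ι ℝ} {R R' : ℝ → Matrix μ μ ℝ}
  {Φ : ℝ → Matrix ι κ ℝ} {Ψ : ℝ → Matrix μ κ ℝ} {a b c : ℝ}

theorem lqCost_sub (h : IntervalIntegrable (quadCost Q R Φ Ψ) volume a b)
    (h' : IntervalIntegrable (quadCost Q' R' Φ Ψ) volume a b) :
    lqCost G Q R Φ Ψ a b - lqCost G' Q' R' Φ Ψ a b = lqCost (G - G') (Q - Q') (R - R') Φ Ψ a b := by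
  have hsub : quadCost (Q - Q') (R - R') Φ Ψ = quadCost Q R Φ Ψ - quadCost Q' R' Φ Ψ := by
    ext1 s
    simp only [quadCost, Pi.sub_apply, Matrix.mul_sub, Matrix.sub_mul]
    abel
  rw [lqCost, lqCost, lqCost, hsub, Pi.sub_def, integral_sub h h', Matrix.mul_sub, Matrix.sub_mul]
  abel

theorem posSemidef_lqCost (hab : a ≤ b) (hG : G.PosSemidef)
    (hQ : ∀ s ∈ Ioo a b, (Q s).PosSemidef) (hR : ∀ s ∈ Ioo a b, (R s).PosSemidef) :
    (lqCost G Q R Φ Ψ a b).PosSemidef := by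
  refine .add ?_ (posSemidef_intervalIntegral hab fun s hs => .add ?_ ?_)
  · simpa [conjTranspose_eq_transpose_of_trivial] using hG.conjTranspose_mul_mul_same (Φ b)
  · simpa [conjTranspose_eq_transpose_of_trivial] using (hQ s hs).conjTranspose_mul_mul_same (Φ s)
  · simpa [conjTranspose_eq_transpose_of_trivial] using (hR s hs).conjTranspose_mul_mul_same (Ψ s)

theorem quadCost_mul_const {κ' : Type*} [Fintype κ'] (M : Matrix κ κ' ℝ) (s : ℝ) :
    quadCost Q R (fun s => Φ s * M) (fun s => Ψ s * M) s = Mᵀ * quadCost Q R Φ Ψ s * M := by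
  simp only [quadCost, Matrix.transpose_mul, Matrix.mul_add, Matrix.add_mul, Matrix.mul_assoc]

theorem lqCost_eq_of_eqOn_mul {Φ₂ : ℝ → Matrix ι κ ℝ} {Ψ₂ : ℝ → Matrix μ κ ℝ}
    {M : Matrix κ κ ℝ} (hcb : c ≤ b)
    (hΦ : ∀ s ∈ Icc c b, Φ s = Φ₂ s * M) (hΨ : ∀ s ∈ Icc c b, Ψ s = Ψ₂ s * M)
    (h : IntervalIntegrable (quadCost Q R Φ Ψ) volume a c)
    (h₂ : IntervalIntegrable (quadCost Q R Φ₂ Ψ₂) volume c b) :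
    lqCost G Q R Φ Ψ a b = Mᵀ * lqCost G Q R Φ₂ Ψ₂ c b * M + ∫ s in a..c, quadCost Q R Φ Ψ s := by
  have hEq : EqOn (quadCost Q R Φ Ψ) (fun s => Mᵀ * quadCost Q R Φ₂ Ψ₂ s * M) (uIcc c b) := by
    intro s hs
    rw [uIcc_of_le hcb] at hs
    beta_reduce
    rw [← quadCost_mul_const]
    simp only [quadCost, hΦ s hs, hΨ s hs]
  have hcb' : IntervalIntegrable (quadCost Q R Φ Ψ) volume c b :=
    ((h₂.matrix_const_mul Mᵀ).matrix_mul_const M).congr (hEq.symm.mono uIoc_subset_uIcc)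
  rw [lqCost, ← integral_add_adjacent_intervals h hcb', integral_congr hEq,
    intervalIntegral_matrix_mul_const (h₂.matrix_const_mul Mᵀ),
    intervalIntegral_matrix_const_mul h₂,
    lqCost, hΦ b ⟨hcb, le_rfl⟩, Matrix.transpose_mul]
  simp only [Matrix.mul_add, Matrix.add_mul, Matrix.mul_assoc]
  abel

end LQCost

section Partition

variable {T : ℝ} {N : ℕ} {tp : ℕ → ℝ}

theorem IsPartition.le_of_le (hΔ : IsPartition T N tp) {i j : ℕ} (hij : i ≤ j) (hj : j ≤ N) :
    tp i ≤ tp j := by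
  induction j, hij using Nat.le_induction with
  | base => exact le_rfl
  | succ j hij ih => exact (ih (by omega)).trans (hΔ.2.2.2 j (by omega)).le

theorem IsPartition.mem_Icc (hΔ : IsPartition T N tp) {j : ℕ} (hj : j ≤ N) : tp j ∈ Icc 0 T :=
  ⟨hΔ.2.1 ▸ hΔ.le_of_le (Nat.zero_le j) hj, hΔ.2.2.1 ▸ hΔ.le_of_le hj le_rfl⟩

theorem IsPartition.Icc_subset (hΔ : IsPartition T N tp) {j : ℕ} (hj : j < N) :
    Icc (tp j) (tp (j + 1)) ⊆ Icc 0 T :=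
  Icc_subset_Icc (hΔ.mem_Icc hj.le).1 (hΔ.mem_Icc hj).2

/-- The regularity of `P^Δ`: continuous on each cell `[t_j, t_{j+1})` with `j ≥ i`, with a
left limit at `t_{j+1}`. -/
def PiecewiseContinuousFrom {E : Type*} [TopologicalSpace E] (N : ℕ) (tp : ℕ → ℝ) (i : ℕ)
    (f : ℝ → E) : Prop :=
  ∀ j, i ≤ j → j < N →
    ∃ g : ℝ → E, ContinuousOn g (Icc (tp j) (tp (j + 1))) ∧ EqOn f g (Ico (tp j) (tp (j + 1)))

section Topological

variable {E F H : Type*} [TopologicalSpace E] [TopologicalSpace F] [TopologicalSpace H]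
  {f : ℝ → E} {g : ℝ → F} {i : ℕ}

theorem PiecewiseContinuousFrom.mono (hf : PiecewiseContinuousFrom N tp i f) {i' : ℕ}
    (hii' : i ≤ i') : PiecewiseContinuousFrom N tp i' f :=
  fun j hj hjN => hf j (hii'.trans hj) hjN

theorem PiecewiseContinuousFrom.comp₂ {h : E → F → H} (hh : Continuous fun p : E × F => h p.1 p.2)
    (hf : PiecewiseContinuousFrom N tp i f) (hg : PiecewiseContinuousFrom N tp i g) :
    PiecewiseContinuousFrom N tp i (fun s => h (f s) (g s)) := by
  intro j hj hjN
  obtain ⟨f', hf', hff'⟩ := hf j hj hjN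
  obtain ⟨g', hg', hgg'⟩ := hg j hj hjN
  exact ⟨fun s => h (f' s) (g' s), hh.comp_continuousOn (hf'.prodMk hg'),
    fun s hs => by simp only [hff' hs, hgg' hs]⟩

theorem PiecewiseContinuousFrom.of_continuousOn (hΔ : IsPartition T N tp)
    (hf : ContinuousOn f (Icc (tp i) T)) : PiecewiseContinuousFrom N tp i f :=
  fun _ hj hjN => ⟨f, hf.mono (Icc_subset_Icc (hΔ.le_of_le hj hjN.le) (hΔ.mem_Icc hjN).2),
    fun _ _ => rfl⟩

theorem PiecewiseContinuousFrom.of_frozen (hΔ : IsPartition T N tp) {X : ℝ → ℝ → E}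
    (hX : ∀ t ∈ Icc 0 T, ContinuousOn (X t) (Icc 0 T))
    (hf : ∀ j < N, ∀ s ∈ Ico (tp j) (tp (j + 1)), f s = X (tp j) s) :
    PiecewiseContinuousFrom N tp 0 f :=
  fun j _ hjN => ⟨X (tp j), (hX _ (hΔ.mem_Icc hjN.le)).mono (hΔ.Icc_subset hjN), hf j hjN⟩

theorem PiecewiseContinuousFrom.continuousAt (hf : PiecewiseContinuousFrom N tp i f) {j : ℕ}
    (hij : i ≤ j) (hj : j < N) {s : ℝ} (hs : s ∈ Ioo (tp j) (tp (j + 1))) :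
    ContinuousAt f s := by
  obtain ⟨g, hg, hfg⟩ := hf j hij hj
  refine ((hg.continuousAt (Icc_mem_nhds hs.1 hs.2))).congr_of_eventuallyEq ?_
  filter_upwards [Ioo_mem_nhds hs.1 hs.2] with r hr using hfg (Ioo_subset_Ico_self hr)

end Topological

variable {E : Type*} [NormedAddCommGroup E] {f : ℝ → E} {i : ℕ}

theorem PiecewiseContinuousFrom.intervalIntegrable (hΔ : IsPartition T N tp)
    (hf : PiecewiseContinuousFrom N tp i f) (hi : i ≤ N) :
    IntervalIntegrable f volume (tp i) T := by
  suffices ∀ j, i ≤ j → j ≤ N → IntervalIntegrable f volume (tp i) (tp j) from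
    hΔ.2.2.1 ▸ this N hi le_rfl
  intro j hij hj
  induction j, hij using Nat.le_induction with
  | base => exact .refl
  | succ j hij ih =>
    obtain ⟨g, hg, hfg⟩ := hf j hij (by omega)
    have hlt := hΔ.2.2.2 j (by omega)
    refine (ih (by omega)).trans ((intervalIntegrable_iff_integrableOn_Ico_of_le hlt.le).2 ?_)
    exact (hg.integrableOn_Icc.mono_set Ico_subset_Icc_self).congr_fun hfg.symm measurableSet_Ico

theorem PiecewiseContinuousFrom.exists_bound (hΔ : IsPartition T N tp)
    (hf : PiecewiseContinuousFrom N tp i f) (hi : i ≤ N) :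
    ∃ K, 0 ≤ K ∧ ∀ r ∈ Ico (tp i) T, ‖f r‖ ≤ K := by
  suffices ∀ j, i ≤ j → j ≤ N → ∃ K, 0 ≤ K ∧ ∀ r ∈ Ico (tp i) (tp j), ‖f r‖ ≤ K from
    hΔ.2.2.1 ▸ this N hi le_rfl
  intro j hij hj
  induction j, hij using Nat.le_induction with
  | base => exact ⟨0, le_rfl, by simp⟩
  | succ j hij ih =>
    obtain ⟨K, hK0, hK⟩ := ih (by omega)
    obtain ⟨g, hg, hfg⟩ := hf j hij (by omega)
    obtain ⟨K', hK'⟩ := isCompact_Icc.exists_bound_of_continuousOn hg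
    refine ⟨max K K', hK0.trans (le_max_left _ _), fun r hr => ?_⟩
    rcases lt_or_ge r (tp j) with hrj | hrj
    · exact (hK r ⟨hr.1, hrj⟩).trans (le_max_left _ _)
    · rw [hfg ⟨hrj, hr.2⟩]
      exact (hK' r ⟨hrj, hr.2.le⟩).trans (le_max_right _ _)

end Partition

section Riccati

theorem HasDerivAt.riccati_quadratic {n m κ : Type*} [Fintype n] [Fintype m] [DecidableEq m]
    [Fintype κ] {P : ℝ → Matrix n n ℝ} {Φ : ℝ → Matrix n κ ℝ} {A Q : Matrix n n ℝ}
    {B : Matrix n m ℝ} {R : Matrix m m ℝ} {s : ℝ} (hR : Rᵀ = R) (hRu : IsUnit R.det)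
    (hP : HasDerivAt P (-(P s * A + Aᵀ * P s + Q - P s * B * R⁻¹ * Bᵀ * P s)) s)
    (hΦ : HasDerivAt Φ ((A - B * R⁻¹ * Bᵀ * P s) * Φ s) s) :
    HasDerivAt (fun t => (Φ t)ᵀ * P t * Φ t)
      (-((Φ s)ᵀ * Q * Φ s + (R⁻¹ * Bᵀ * P s * Φ s)ᵀ * R * (R⁻¹ * Bᵀ * P s * Φ s))) s := by
  refine ((hΦ.matrix_transpose.matrix_mul hP).matrix_mul hΦ).congr_deriv ?_
  have hRinv : (R⁻¹)ᵀ = R⁻¹ := by rw [transpose_nonsing_inv, hR]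
  have hcancel : R⁻¹ * (R * (R⁻¹ * (Bᵀ * (P s * Φ s)))) = R⁻¹ * (Bᵀ * (P s * Φ s)) := by
    rw [← Matrix.mul_assoc R, mul_nonsing_inv R hRu, Matrix.one_mul]
  simp only [Matrix.transpose_mul, Matrix.transpose_sub, Matrix.transpose_transpose, hRinv,
    Matrix.mul_assoc, hcancel, Matrix.mul_add, Matrix.add_mul, Matrix.mul_sub, Matrix.sub_mul,
    Matrix.mul_neg, Matrix.neg_mul]
  abel

noncomputable def closedLoopMatrix {ι μ : Type*} [Fintype ι] [Fintype μ] [DecidableEq μ]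
    (AΔ : ℝ → Matrix ι ι ℝ) (BΔ : ℝ → Matrix ι μ ℝ) (RΔ : ℝ → Matrix μ μ ℝ)
    (PΔ : ℝ → Matrix ι ι ℝ) (s : ℝ) : Matrix ι ι ℝ :=
  AΔ s - BΔ s * (RΔ s)⁻¹ * (BΔ s)ᵀ * PΔ s

/-- `−feedbackGain · Φ^Δ(·; t_k)` is the closed-loop control `Ψ^Δ(·; t_k)`; the sign plays no
role in the quadratic cost. -/
noncomputable def feedbackGain {ι μ : Type*} [Fintype ι] [Fintype μ] [DecidableEq μ]
    (BΔ : ℝ → Matrix ι μ ℝ) (RΔ : ℝ → Matrix μ μ ℝ) (PΔ : ℝ → Matrix ι ι ℝ) (s : ℝ) :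
    Matrix μ ι ℝ :=
  (RΔ s)⁻¹ * (BΔ s)ᵀ * PΔ s

variable {n m N : ℕ} {T : ℝ} {tp : ℕ → ℝ}
  {A : ℝ → ℝ → Matrix (Fin n) (Fin n) ℝ} {B : ℝ → ℝ → Matrix (Fin n) (Fin m) ℝ}
  {Q : ℝ → ℝ → Matrix (Fin n) (Fin n) ℝ} {R : ℝ → ℝ → Matrix (Fin m) (Fin m) ℝ}
  {G : ℝ → Matrix (Fin n) (Fin n) ℝ}
  {AΔ : ℝ → Matrix (Fin n) (Fin n) ℝ} {BΔ : ℝ → Matrix (Fin n) (Fin m) ℝ}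
  {QΔ : ℝ → Matrix (Fin n) (Fin n) ℝ} {RΔ : ℝ → Matrix (Fin m) (Fin m) ℝ}
  {PΔ : ℝ → Matrix (Fin n) (Fin n) ℝ} {Φ : ℕ → ℝ → Matrix (Fin n) (Fin n) ℝ}

namespace IsPiecewiseRiccati

theorem tendsto_nhdsLT (hPΔ : IsPiecewiseRiccati n m N T tp Q R G AΔ BΔ QΔ RΔ PΔ Φ) {j : ℕ}
    (hj : j < N) :
    Tendsto PΔ (𝓝[<] tp (j + 1)) (𝓝 (lqCost (G (tp j)) (Q (tp j)) (R (tp j)) (Φ (j + 1))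
      (fun s => feedbackGain BΔ RΔ PΔ s * Φ (j + 1) s) (tp (j + 1)) T)) :=
  hPΔ.2.2.2.2 (j + 1) (by omega) hj

theorem continuousOn_update (hPΔ : IsPiecewiseRiccati n m N T tp Q R G AΔ BΔ QΔ RΔ PΔ Φ)
    {j : ℕ} (hj : j < N) :
    ContinuousOn (Function.update PΔ (tp (j + 1)) (lqCost (G (tp j)) (Q (tp j)) (R (tp j))
      (Φ (j + 1)) (fun s => feedbackGain BΔ RΔ PΔ s * Φ (j + 1) s) (tp (j + 1)) T))
      (Icc (tp j) (tp (j + 1))) := by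
  rw [continuousOn_update_iff, Icc_sdiff_right]
  exact ⟨hPΔ.1 j hj, fun _ =>
    (hPΔ.tendsto_nhdsLT hj).mono_left (nhdsWithin_mono _ fun r hr => hr.2)⟩

theorem piecewiseContinuousFrom (hPΔ : IsPiecewiseRiccati n m N T tp Q R G AΔ BΔ QΔ RΔ PΔ Φ) :
    PiecewiseContinuousFrom N tp 0 PΔ :=
  fun _ _ hj => ⟨_, hPΔ.continuousOn_update hj,
    fun _ hs => (Function.update_of_ne hs.2.ne _ _).symm⟩

end IsPiecewiseRiccati

theorem piecewiseContinuousFrom_closedLoopMatrix_feedbackGain (hΔ : IsPartition T N tp)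
    (hfroz : IsFrozen n m N tp A B Q R AΔ BΔ QΔ RΔ)
    (hPΔ : IsPiecewiseRiccati n m N T tp Q R G AΔ BΔ QΔ RΔ PΔ Φ)
    (hA : ∀ t ∈ Icc 0 T, ContinuousOn (A t) (Icc 0 T))
    (hB : ∀ t ∈ Icc 0 T, ContinuousOn (B t) (Icc 0 T))
    (hRinv : ∀ t ∈ Icc 0 T, ContinuousOn (fun s => (R t s)⁻¹) (Icc 0 T)) :
    PiecewiseContinuousFrom N tp 0 (closedLoopMatrix AΔ BΔ RΔ PΔ) ∧
      PiecewiseContinuousFrom N tp 0 (feedbackGain BΔ RΔ PΔ) := by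
  have hAΔ : PiecewiseContinuousFrom N tp 0 AΔ :=
    .of_frozen hΔ hA fun j hj s hs => (hfroz j hj s hs).1
  have hBΔ : PiecewiseContinuousFrom N tp 0 BΔ :=
    .of_frozen hΔ hB fun j hj s hs => (hfroz j hj s hs).2.1
  have hRΔ : PiecewiseContinuousFrom N tp 0 (fun s => (RΔ s)⁻¹) :=
    .of_frozen hΔ hRinv fun j hj s hs => by rw [(hfroz j hj s hs).2.2.2]
  have hPΔ' := hPΔ.piecewiseContinuousFrom
  refine ⟨hAΔ.comp₂ (h := fun X Y => X - Y) (by fun_prop) ?_, ?_⟩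
  · exact ((hBΔ.comp₂ (h := fun X Y => X * Y) (by fun_prop) hRΔ).comp₂
      (h := fun X Y => X * Yᵀ) (by fun_prop) hBΔ).comp₂ (h := fun X Y => X * Y) (by fun_prop) hPΔ'
  · exact (hRΔ.comp₂ (h := fun X Y => X * Yᵀ) (by fun_prop) hBΔ).comp₂
      (h := fun X Y => X * Y) (by fun_prop) hPΔ'

namespace IsPiecewiseRiccati

theorem intervalIntegrable_closedLoopMatrix_mul (hΔ : IsPartition T N tp)
    (hPΔ : IsPiecewiseRiccati n m N T tp Q R G AΔ BΔ QΔ RΔ PΔ Φ)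
    (hC : PiecewiseContinuousFrom N tp 0 (closedLoopMatrix AΔ BΔ RΔ PΔ)) {x : ℕ} (hx : x ≤ N) :
    IntervalIntegrable (fun r => closedLoopMatrix AΔ BΔ RΔ PΔ r * Φ x r) volume (tp x) T := by
  have hCx := hC.mono (Nat.zero_le x)
  obtain ⟨K, hK0, hK⟩ := hCx.exists_bound hΔ hx
  exact intervalIntegrable_of_volterra (hΔ.mem_Icc hx).2 hK0
    ((hCx.intervalIntegrable hΔ hx).1.mono_set Ioo_subset_Ioc_self).aestronglyMeasurable
    (fun r hr => hK r (Ioo_subset_Ico_self hr)) (hPΔ.2.2.2.1 x hx)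

theorem continuousOn_fundamental (hΔ : IsPartition T N tp)
    (hPΔ : IsPiecewiseRiccati n m N T tp Q R G AΔ BΔ QΔ RΔ PΔ Φ)
    (hC : PiecewiseContinuousFrom N tp 0 (closedLoopMatrix AΔ BΔ RΔ PΔ)) {x : ℕ} (hx : x ≤ N) :
    ContinuousOn (Φ x) (Icc (tp x) T) :=
  continuousOn_of_volterra (hΔ.mem_Icc hx).2 (hPΔ.intervalIntegrable_closedLoopMatrix_mul hΔ hC hx)
    (hPΔ.2.2.2.1 x hx)

theorem intervalIntegrable_quadCost (hΔ : IsPartition T N tp)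
    (hPΔ : IsPiecewiseRiccati n m N T tp Q R G AΔ BΔ QΔ RΔ PΔ Φ)
    (hC : PiecewiseContinuousFrom N tp 0 (closedLoopMatrix AΔ BΔ RΔ PΔ))
    (hK : PiecewiseContinuousFrom N tp 0 (feedbackGain BΔ RΔ PΔ))
    (hQ : ∀ t ∈ Icc 0 T, ContinuousOn (Q t) (Icc 0 T))
    (hR : ∀ t ∈ Icc 0 T, ContinuousOn (R t) (Icc 0 T)) {t : ℝ} (ht : t ∈ Icc 0 T) {x : ℕ}
    (hx : x ≤ N) :
    IntervalIntegrable (quadCost (Q t) (R t) (Φ x) (fun s => feedbackGain BΔ RΔ PΔ s * Φ x s))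
      volume (tp x) T := by
  have hsub : Icc (tp x) T ⊆ Icc 0 T := Icc_subset_Icc_left (hΔ.mem_Icc hx).1
  have hΦ : PiecewiseContinuousFrom N tp x (Φ x) :=
    .of_continuousOn hΔ (hPΔ.continuousOn_fundamental hΔ hC hx)
  have hQt : PiecewiseContinuousFrom N tp x (Q t) := .of_continuousOn hΔ ((hQ t ht).mono hsub)
  have hRt : PiecewiseContinuousFrom N tp x (R t) := .of_continuousOn hΔ ((hR t ht).mono hsub)
  have hΨ := (hK.mono (Nat.zero_le x)).comp₂ (h := fun X Y => X * Y) (by fun_prop) hΦ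
  refine PiecewiseContinuousFrom.intervalIntegrable hΔ ?_ hx
  exact (((hΦ.comp₂ (h := fun X Y => Xᵀ * Y) (by fun_prop) hQt).comp₂ (h := fun X Y => X * Y)
    (by fun_prop) hΦ).comp₂ (h := fun X Y => X + Y) (by fun_prop)
    ((hΨ.comp₂ (h := fun X Y => Xᵀ * Y) (by fun_prop) hRt).comp₂ (h := fun X Y => X * Y)
      (by fun_prop) hΨ))

theorem eq_fundamental_succ_mul (hΔ : IsPartition T N tp)
    (hPΔ : IsPiecewiseRiccati n m N T tp Q R G AΔ BΔ QΔ RΔ PΔ Φ)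
    (hC : PiecewiseContinuousFrom N tp 0 (closedLoopMatrix AΔ BΔ RΔ PΔ)) {k : ℕ} (hk : k < N) :
    ∀ s ∈ Icc (tp (k + 1)) T, Φ k s = Φ (k + 1) s * Φ k (tp (k + 1)) := by
  obtain ⟨K, hK0, hK⟩ := (hC.mono (Nat.zero_le (k + 1))).exists_bound hΔ hk
  exact eq_mul_of_volterra (hΔ.le_of_le k.le_succ hk) (hΔ.mem_Icc hk).2 hK0
    (fun r hr => hK r (Ioo_subset_Ico_self hr))
    (hPΔ.intervalIntegrable_closedLoopMatrix_mul hΔ hC hk.le) (hPΔ.2.2.2.1 k hk.le)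
    (hPΔ.intervalIntegrable_closedLoopMatrix_mul hΔ hC hk) (hPΔ.2.2.2.1 (k + 1) hk)

theorem hasDerivAt_conj_update (hΔ : IsPartition T N tp)
    (hfroz : IsFrozen n m N tp A B Q R AΔ BΔ QΔ RΔ)
    (hPΔ : IsPiecewiseRiccati n m N T tp Q R G AΔ BΔ QΔ RΔ PΔ Φ)
    (hC : PiecewiseContinuousFrom N tp 0 (closedLoopMatrix AΔ BΔ RΔ PΔ))
    (hRpd : ∀ t ∈ Icc 0 T, ∀ s ∈ Icc 0 T, (R t s).PosDef) {k : ℕ} (hk : k < N)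
    (V : Matrix (Fin n) (Fin n) ℝ) {s : ℝ} (hs : s ∈ Ioo (tp k) (tp (k + 1))) :
    HasDerivAt (fun s => (Φ k s)ᵀ * Function.update PΔ (tp (k + 1)) V s * Φ k s)
      (-quadCost (Q (tp k)) (R (tp k)) (Φ k) (fun s => feedbackGain BΔ RΔ PΔ s * Φ k s) s) s := by
  set P' := Function.update PΔ (tp (k + 1)) V
  obtain ⟨-, -, hQs, hRs⟩ := hfroz k hk s (Ioo_subset_Ico_self hs)
  have hbT : tp (k + 1) ≤ T := (hΔ.mem_Icc hk).2
  have hPs : P' s = PΔ s := Function.update_of_ne hs.2.ne _ _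
  have hRpds : (RΔ s).PosDef :=
    hRs ▸ hRpd _ (hΔ.mem_Icc hk.le) s (hΔ.Icc_subset hk (Ioo_subset_Icc_self hs))
  have hRsymm : (RΔ s)ᵀ = RΔ s := by
    simpa [IsHermitian, conjTranspose_eq_transpose_of_trivial] using hRpds.isHermitian
  have hPderiv : HasDerivAt P' (-(P' s * AΔ s + (AΔ s)ᵀ * P' s + QΔ s
      - P' s * BΔ s * (RΔ s)⁻¹ * (BΔ s)ᵀ * P' s)) s := by
    rw [hPs]
    exact (hPΔ.2.2.1 k hk s hs).congr_of_eventuallyEq (by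
      filter_upwards [Iio_mem_nhds hs.2] with r hr using Function.update_of_ne hr.ne _ _)
  have hΦderiv : HasDerivAt (Φ k) ((AΔ s - BΔ s * (RΔ s)⁻¹ * (BΔ s)ᵀ * P' s) * Φ k s) s := by
    rw [hPs]
    exact hasDerivAt_of_volterra (hPΔ.intervalIntegrable_closedLoopMatrix_mul hΔ hC hk.le)
      (hPΔ.2.2.2.1 k hk.le) ⟨hs.1, hs.2.trans_le hbT⟩ (hC.continuousAt (Nat.zero_le k) hk hs)
      ((hPΔ.continuousOn_fundamental hΔ hC hk.le).continuousAt
        (Icc_mem_nhds hs.1 (hs.2.trans_le hbT)))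
  refine (HasDerivAt.riccati_quadratic (P := P') (A := AΔ s) (Q := QΔ s) (B := BΔ s)
    hRsymm (isUnit_iff_ne_zero.2 hRpds.det_pos.ne') hPderiv hΦderiv).congr_deriv ?_
  simp only [quadCost, feedbackGain, hPs, hQs, ← hRs]

theorem apply_eq_conj_add_integral_cell (hΔ : IsPartition T N tp)
    (hfroz : IsFrozen n m N tp A B Q R AΔ BΔ QΔ RΔ)
    (hPΔ : IsPiecewiseRiccati n m N T tp Q R G AΔ BΔ QΔ RΔ PΔ Φ)
    (hC : PiecewiseContinuousFrom N tp 0 (closedLoopMatrix AΔ BΔ RΔ PΔ))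
    (hK : PiecewiseContinuousFrom N tp 0 (feedbackGain BΔ RΔ PΔ))
    (hQ : ∀ t ∈ Icc 0 T, ContinuousOn (Q t) (Icc 0 T))
    (hR : ∀ t ∈ Icc 0 T, ContinuousOn (R t) (Icc 0 T))
    (hRpd : ∀ t ∈ Icc 0 T, ∀ s ∈ Icc 0 T, (R t s).PosDef) {k : ℕ} (hk : k < N) :
    PΔ (tp k) = (Φ k (tp (k + 1)))ᵀ * lqCost (G (tp k)) (Q (tp k)) (R (tp k)) (Φ (k + 1))
        (fun s => feedbackGain BΔ RΔ PΔ s * Φ (k + 1) s) (tp (k + 1)) T * Φ k (tp (k + 1))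
      + ∫ s in tp k..tp (k + 1),
          quadCost (Q (tp k)) (R (tp k)) (Φ k) (fun s => feedbackGain BΔ RΔ PΔ s * Φ k s) s := by
  -- `P'` is `P^Δ` on the cell, extended continuously by its left limit at `t_{k+1}`
  set P' := Function.update PΔ (tp (k + 1)) (lqCost (G (tp k)) (Q (tp k)) (R (tp k))
    (Φ (k + 1)) (fun s => feedbackGain BΔ RΔ PΔ s * Φ (k + 1) s) (tp (k + 1)) T)
  have hab : tp k < tp (k + 1) := hΔ.2.2.2 k hk
  have hbT : tp (k + 1) ≤ T := (hΔ.mem_Icc hk).2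
  have hΦ := (hPΔ.continuousOn_fundamental hΔ hC hk.le).mono (Icc_subset_Icc_right hbT)
  have hP' := hPΔ.continuousOn_update hk
  have hcont : ContinuousOn (fun s => (Φ k s)ᵀ * P' s * Φ k s) (Icc (tp k) (tp (k + 1))) := by
    fun_prop
  have hint : IntervalIntegrable (quadCost (Q (tp k)) (R (tp k)) (Φ k)
      (fun s => feedbackGain BΔ RΔ PΔ s * Φ k s)) volume (tp k) (tp (k + 1)) :=
    (hPΔ.intervalIntegrable_quadCost hΔ hC hK hQ hR (hΔ.mem_Icc hk.le) hk.le).mono_set (by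
      rw [uIcc_of_le hab.le, uIcc_of_le (hab.le.trans hbT)]; exact Icc_subset_Icc_right hbT)
  have hftc := integral_eq_sub_of_hasDerivAt_of_le hab.le hcont
    (fun s hs => hPΔ.hasDerivAt_conj_update hΔ hfroz hC hRpd hk _ hs) hint.neg
  have hΦa : Φ k (tp k) = 1 := by
    simpa using hPΔ.2.2.2.1 k hk.le (tp k) ⟨le_rfl, (hΔ.mem_Icc hk.le).2⟩
  have hPa : P' (tp k) = PΔ (tp k) := Function.update_of_ne hab.ne _ _
  have hPb : P' (tp (k + 1)) = _ := Function.update_self _ _ _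
  rw [intervalIntegral.integral_neg, hPa, hPb, hΦa] at hftc
  simp only [Matrix.transpose_one, Matrix.one_mul, Matrix.mul_one] at hftc
  rw [← sub_eq_iff_eq_add', ← neg_sub, ← hftc, neg_neg]

theorem apply_eq_lqCost (hΔ : IsPartition T N tp) (hfroz : IsFrozen n m N tp A B Q R AΔ BΔ QΔ RΔ)
    (hPΔ : IsPiecewiseRiccati n m N T tp Q R G AΔ BΔ QΔ RΔ PΔ Φ)
    (hC : PiecewiseContinuousFrom N tp 0 (closedLoopMatrix AΔ BΔ RΔ PΔ))
    (hK : PiecewiseContinuousFrom N tp 0 (feedbackGain BΔ RΔ PΔ))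
    (hQ : ∀ t ∈ Icc 0 T, ContinuousOn (Q t) (Icc 0 T))
    (hR : ∀ t ∈ Icc 0 T, ContinuousOn (R t) (Icc 0 T))
    (hRpd : ∀ t ∈ Icc 0 T, ∀ s ∈ Icc 0 T, (R t s).PosDef) {k : ℕ} (hk : k < N) :
    PΔ (tp k) = lqCost (G (tp k)) (Q (tp k)) (R (tp k)) (Φ k)
      (fun s => feedbackGain BΔ RΔ PΔ s * Φ k s) (tp k) T := by
  have hab : tp k ≤ tp (k + 1) := (hΔ.2.2.2 k hk).le
  have hbT : tp (k + 1) ≤ T := (hΔ.mem_Icc hk).2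
  have hcocycle := hPΔ.eq_fundamental_succ_mul hΔ hC hk
  rw [lqCost_eq_of_eqOn_mul hbT hcocycle (fun s hs => by rw [hcocycle s hs, Matrix.mul_assoc])
    ((hPΔ.intervalIntegrable_quadCost hΔ hC hK hQ hR (hΔ.mem_Icc hk.le) hk.le).mono_set (by
      rw [uIcc_of_le hab, uIcc_of_le (hab.trans hbT)]; exact Icc_subset_Icc_right hbT))
    (hPΔ.intervalIntegrable_quadCost hΔ hC hK hQ hR (hΔ.mem_Icc hk.le) hk)]
  exact hPΔ.apply_eq_conj_add_integral_cell hΔ hfroz hC hK hQ hR hRpd hk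

theorem tendsto_nhdsGT (hΔ : IsPartition T N tp)
    (hPΔ : IsPiecewiseRiccati n m N T tp Q R G AΔ BΔ QΔ RΔ PΔ Φ) {k : ℕ} (hk : k < N) :
    Tendsto PΔ (𝓝[>] tp k) (𝓝 (PΔ (tp k))) :=
  (hPΔ.1 k hk (tp k) ⟨le_rfl, hΔ.2.2.2 k hk⟩).mono_of_mem_nhdsWithin
    (Ico_mem_nhdsGT (hΔ.2.2.2 k hk))

theorem apply_sub_lqCost_eq (hΔ : IsPartition T N tp)
    (hfroz : IsFrozen n m N tp A B Q R AΔ BΔ QΔ RΔ)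
    (hPΔ : IsPiecewiseRiccati n m N T tp Q R G AΔ BΔ QΔ RΔ PΔ Φ)
    (hA : ∀ t ∈ Icc 0 T, ContinuousOn (A t) (Icc 0 T))
    (hB : ∀ t ∈ Icc 0 T, ContinuousOn (B t) (Icc 0 T))
    (hQ : ∀ t ∈ Icc 0 T, ContinuousOn (Q t) (Icc 0 T))
    (hR : ∀ t ∈ Icc 0 T, ContinuousOn (R t) (Icc 0 T))
    (hRpd : ∀ t ∈ Icc 0 T, ∀ s ∈ Icc 0 T, (R t s).PosDef) {k : ℕ} (hk : k < N) {t : ℝ}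
    (ht : t ∈ Icc 0 T) :
    PΔ (tp k) - lqCost (G t) (Q t) (R t) (Φ k) (fun s => feedbackGain BΔ RΔ PΔ s * Φ k s) (tp k) T
      = lqCost (G (tp k) - G t) (Q (tp k) - Q t) (R (tp k) - R t) (Φ k)
          (fun s => feedbackGain BΔ RΔ PΔ s * Φ k s) (tp k) T := by
  have hRinv : ∀ t ∈ Icc 0 T, ContinuousOn (fun s => (R t s)⁻¹) (Icc 0 T) := fun t ht =>
    (hR t ht).matrix_inv fun s hs => isUnit_iff_ne_zero.2 (hRpd t ht s hs).det_pos.ne'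
  obtain ⟨hC, hK⟩ := piecewiseContinuousFrom_closedLoopMatrix_feedbackGain hΔ hfroz hPΔ hA hB hRinv
  rw [hPΔ.apply_eq_lqCost hΔ hfroz hC hK hQ hR hRpd hk,
    lqCost_sub (hPΔ.intervalIntegrable_quadCost hΔ hC hK hQ hR (hΔ.mem_Icc hk.le) hk.le)
      (hPΔ.intervalIntegrable_quadCost hΔ hC hK hQ hR ht hk.le)]

end IsPiecewiseRiccati

end Riccati

end

theorem stmt_3_general (n m : ℕ) (T δ : ℝ) (hδ : 0 < δ)
    (A : ℝ → ℝ → Matrix (Fin n) (Fin n) ℝ) (B : ℝ → ℝ → Matrix (Fin n) (Fin m) ℝ)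
    (Q : ℝ → ℝ → Matrix (Fin n) (Fin n) ℝ) (R : ℝ → ℝ → Matrix (Fin m) (Fin m) ℝ)
    (G : ℝ → Matrix (Fin n) (Fin n) ℝ)
    -- (H1): continuity
    (hAc : ContinuousOn (fun p : ℝ × ℝ => A p.1 p.2) (Icc 0 T ×ˢ Icc 0 T))
    (hBc : ContinuousOn (fun p : ℝ × ℝ => B p.1 p.2) (Icc 0 T ×ˢ Icc 0 T))
    (hQc : ContinuousOn (fun p : ℝ × ℝ => Q p.1 p.2) (Icc 0 T ×ˢ Icc 0 T))
    (hRc : ContinuousOn (fun p : ℝ × ℝ => R p.1 p.2) (Icc 0 T ×ˢ Icc 0 T))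
    -- (H1): positivity
    (hR : ∀ t ∈ Icc (0:ℝ) T, ∀ s ∈ Icc (0:ℝ) T,
      (R t s - δ • (1 : Matrix (Fin m) (Fin m) ℝ)).PosSemidef)
    -- (H2): monotonicity in the first variable
    (hGm : ∀ t r : ℝ, 0 ≤ t → t ≤ r → r ≤ T → (G r - G t).PosSemidef)
    (hQm : ∀ t r s : ℝ, 0 ≤ t → t ≤ r → r ≤ s → s ≤ T → (Q r s - Q t s).PosSemidef)
    (hRm : ∀ t r s : ℝ, 0 ≤ t → t ≤ r → r ≤ s → s ≤ T → (R r s - R t s).PosSemidef)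
    (N : ℕ) (tp : ℕ → ℝ) (hpart : IsPartition T N tp)
    (AΔ : ℝ → Matrix (Fin n) (Fin n) ℝ) (BΔ : ℝ → Matrix (Fin n) (Fin m) ℝ)
    (QΔ : ℝ → Matrix (Fin n) (Fin n) ℝ) (RΔ : ℝ → Matrix (Fin m) (Fin m) ℝ)
    (hfroz : IsFrozen n m N tp A B Q R AΔ BΔ QΔ RΔ)
    (PΔ : ℝ → Matrix (Fin n) (Fin n) ℝ) (Φ : ℕ → ℝ → Matrix (Fin n) (Fin n) ℝ)
    (hPΔ : IsPiecewiseRiccati n m N T tp Q R G AΔ BΔ QΔ RΔ PΔ Φ) :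
    ∀ k, 1 ≤ k → k < N →
      ∃ Pp Pm : Matrix (Fin n) (Fin n) ℝ,
        Filter.Tendsto PΔ (nhdsWithin (tp k) (Ioi (tp k))) (nhds Pp) ∧
        Filter.Tendsto PΔ (nhdsWithin (tp k) (Iio (tp k))) (nhds Pm) ∧
        Pp - Pm
          = (Φ k T)ᵀ * (G (tp k) - G (tp (k - 1))) * Φ k T
            + ∫ s in (tp k)..T,
                ((Φ k s)ᵀ * (Q (tp k) s - Q (tp (k - 1)) s) * Φ k s
                  + ((RΔ s)⁻¹ * (BΔ s)ᵀ * PΔ s * Φ k s)ᵀ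
                      * (R (tp k) s - R (tp (k - 1)) s)
                      * ((RΔ s)⁻¹ * (BΔ s)ᵀ * PΔ s * Φ k s)) ∧
        (Pp - Pm).PosSemidef := by
  intro k hk1 hkN
  have hRpd : ∀ t ∈ Icc (0:ℝ) T, ∀ s ∈ Icc (0:ℝ) T, (R t s).PosDef :=
    fun t ht s hs => (hR t ht s hs).posDef_of_sub_smul_one hδ
  have hprev : tp (k - 1) ∈ Icc 0 T := hpart.mem_Icc (by omega)
  have hmono : tp (k - 1) ≤ tp k := hpart.le_of_le (by omega) hkN.le
  have hkT : tp k ≤ T := (hpart.mem_Icc hkN.le).2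
  have hjump := hPΔ.apply_sub_lqCost_eq hpart hfroz (fun t ht => hAc.uncurry_left t ht)
    (fun t ht => hBc.uncurry_left t ht) (fun t ht => hQc.uncurry_left t ht)
    (fun t ht => hRc.uncurry_left t ht) hRpd hkN hprev
  refine ⟨PΔ (tp k), _, hPΔ.tendsto_nhdsGT hpart hkN, hPΔ.2.2.2.2 k hk1 hkN.le, hjump, ?_⟩
  exact (congrArg Matrix.PosSemidef hjump).mpr (posSemidef_lqCost hkT (hGm _ _ hprev.1 hmono hkT)
    (fun s hs => hQm _ _ s hprev.1 hmono hs.1.le hs.2.le)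
    (fun s hs => hRm _ _ s hprev.1 hmono hs.1.le hs.2.le))

/-- under (H1)–(H2), at every interior node `t_k` (`1 ≤ k ≤ N−1`) the
jump `ΔP^Δ(t_k) = P^Δ(t_k+0) − P^Δ(t_k−0)` equals
`Φ^Δ(T;t_k)ᵀ[G(t_k)−G(t_{k−1})]Φ^Δ(T;t_k) + ∫_{t_k}^T [Φ^Δᵀ(Q(t_k,·)−Q(t_{k−1},·))Φ^Δ
 + Ψ^Δᵀ(R(t_k,·)−R(t_{k−1},·))Ψ^Δ] ds`, a positive semidefinite matrix. -/
theorem stmt_3 (n m : ℕ) (T L δ : ℝ) (hT : 0 < T) (hL : 0 < L) (hδ : 0 < δ)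
    (A : ℝ → ℝ → Matrix (Fin n) (Fin n) ℝ) (B : ℝ → ℝ → Matrix (Fin n) (Fin m) ℝ)
    (Q : ℝ → ℝ → Matrix (Fin n) (Fin n) ℝ) (R : ℝ → ℝ → Matrix (Fin m) (Fin m) ℝ)
    (G : ℝ → Matrix (Fin n) (Fin n) ℝ)
    -- (H1): continuity
    (hAc : ContinuousOn (fun p : ℝ × ℝ => A p.1 p.2) (Icc 0 T ×ˢ Icc 0 T))
    (hBc : ContinuousOn (fun p : ℝ × ℝ => B p.1 p.2) (Icc 0 T ×ˢ Icc 0 T))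
    (hQc : ContinuousOn (fun p : ℝ × ℝ => Q p.1 p.2) (Icc 0 T ×ˢ Icc 0 T))
    (hRc : ContinuousOn (fun p : ℝ × ℝ => R p.1 p.2) (Icc 0 T ×ˢ Icc 0 T))
    (hGc : ContinuousOn G (Icc 0 T))
    -- (H1): Lipschitz continuity in the first variable
    (hLip : ∀ t ∈ Icc (0:ℝ) T, ∀ r ∈ Icc (0:ℝ) T, ∀ s ∈ Icc (0:ℝ) T,
      ‖A t s - A r s‖ + ‖B t s - B r s‖ + ‖Q t s - Q r s‖ + ‖R t s - R r s‖
          + ‖G t - G r‖ ≤ L * |t - r|)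
    -- (H1): positivity
    (hQ : ∀ t ∈ Icc (0:ℝ) T, ∀ s ∈ Icc (0:ℝ) T, (Q t s).PosSemidef)
    (hG : ∀ t ∈ Icc (0:ℝ) T, (G t).PosSemidef)
    (hR : ∀ t ∈ Icc (0:ℝ) T, ∀ s ∈ Icc (0:ℝ) T,
      (R t s - δ • (1 : Matrix (Fin m) (Fin m) ℝ)).PosSemidef)
    -- (H2): monotonicity in the first variable
    (hGm : ∀ t r : ℝ, 0 ≤ t → t ≤ r → r ≤ T → (G r - G t).PosSemidef)
    (hQm : ∀ t r s : ℝ, 0 ≤ t → t ≤ r → r ≤ s → s ≤ T → (Q r s - Q t s).PosSemidef)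
    (hRm : ∀ t r s : ℝ, 0 ≤ t → t ≤ r → r ≤ s → s ≤ T → (R r s - R t s).PosSemidef)
    (N : ℕ) (tp : ℕ → ℝ) (hpart : IsPartition T N tp)
    (AΔ : ℝ → Matrix (Fin n) (Fin n) ℝ) (BΔ : ℝ → Matrix (Fin n) (Fin m) ℝ)
    (QΔ : ℝ → Matrix (Fin n) (Fin n) ℝ) (RΔ : ℝ → Matrix (Fin m) (Fin m) ℝ)
    (hfroz : IsFrozen n m N tp A B Q R AΔ BΔ QΔ RΔ)
    (PΔ : ℝ → Matrix (Fin n) (Fin n) ℝ) (Φ : ℕ → ℝ → Matrix (Fin n) (Fin n) ℝ)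
    (hPΔ : IsPiecewiseRiccati n m N T tp Q R G AΔ BΔ QΔ RΔ PΔ Φ) :
    ∀ k, 1 ≤ k → k < N →
      ∃ Pp Pm : Matrix (Fin n) (Fin n) ℝ,
        Filter.Tendsto PΔ (nhdsWithin (tp k) (Ioi (tp k))) (nhds Pp) ∧
        Filter.Tendsto PΔ (nhdsWithin (tp k) (Iio (tp k))) (nhds Pm) ∧
        Pp - Pm
          = (Φ k T)ᵀ * (G (tp k) - G (tp (k - 1))) * Φ k T
            + ∫ s in (tp k)..T,
                ((Φ k s)ᵀ * (Q (tp k) s - Q (tp (k - 1)) s) * Φ k s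
                  + ((RΔ s)⁻¹ * (BΔ s)ᵀ * PΔ s * Φ k s)ᵀ
                      * (R (tp k) s - R (tp (k - 1)) s)
                      * ((RΔ s)⁻¹ * (BΔ s)ᵀ * PΔ s * Φ k s)) ∧
        (Pp - Pm).PosSemidef :=
  stmt_3_general n m T δ hδ A B Q R G hAc hBc hQc hRc hR hGm hQm hRm N tp hpart AΔ BΔ QΔ RΔ hfroz PΔ
    Φ hPΔ
end

section
/- Let h:[0,T]→[δ,∞) with δ>0, fix 0 ≤ t < τ < T and x ∈ ℝ, let ū(s) ≡ −xh(t)/(1+h(t)(T−t)) and y = x(1+h(t)(T−τ))/(1+h(t)(T−t)). Write J(τ,y;u) = ∫_τ^T u(s)²ds + h(τ)(y+∫_τ^T u(s)ds)² for u ∈ L²(τ,T;ℝ). Then J(τ,y;ū|_{[τ,T]}) − inf_{u∈L²(τ,T;ℝ)} J(τ,y;u) = x²(h(τ)−h(t))²(T−τ) / ( [1+h(τ)(T−τ)]·[1+h(t)(T−t)]² ), which is strictly positive whenever x ≠ 0 and h(τ) ≠ h(t). In particular, the restriction to [τ,T] of the optimal control for (t,x) is not optimal for the initial pair (τ,y)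 unless x=0 or h(τ)=h(t): Problem (C) is time-inconsistent. -/
open Set MeasureTheory

/-! By Jensen's (Cauchy–Schwarz) inequality `(∫ u)² ≤ (T - τ) ∫ u²`, the cost `J(τ,y;u)` is
bounded below by a quadratic function of `A = ∫ u`, whose minimum `h(τ)y²/(1 + h(τ)(T - τ))` is
attained by a constant control. The restricted control `ū` is constant too, so its excess cost is
an explicit rational expression; it is a multiple of `(h(τ) - h(t))²` because `ū|_{[τ,T]}` is the
optimal control for `(τ, y)` computed with the weight `h(t)` instead of `h(τ)`. -/

theorem sq_integral_le_measureReal_mul_integral_sq {α : Type*} [MeasurableSpace α]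
    {μ : Measure α} [IsFiniteMeasure μ] {u : α → ℝ} (hu : MemLp u 2 μ) :
    (∫ s, u s ∂μ) ^ 2 ≤ μ.real univ * ∫ s, u s ^ 2 ∂μ := by
  rcases eq_zero_or_neZero μ with rfl | _
  · simp
  have hm : 0 < μ.real univ := measureReal_univ_pos
  have jensen : (⨍ s, u s ∂μ) ^ 2 ≤ ⨍ s, u s ^ 2 ∂μ :=
    (even_two.convexOn_pow (𝕜 := ℝ)).map_average_le (continuous_pow 2).continuousOn
      isClosed_univ (by simp) (hu.integrable one_le_two) hu.integrable_sq
  rw [average_eq, average_eq, smul_eq_mul, smul_eq_mul] at jensen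
  field_simp at jensen
  exact jensen

theorem sq_integral_le_mul_integral_sq_Ioc {a b : ℝ} (hab : a ≤ b) {u : ℝ → ℝ}
    (hu : MemLp u 2 (volume.restrict (Ioc a b))) :
    (∫ s in a..b, u s) ^ 2 ≤ (b - a) * ∫ s in a..b, u s ^ 2 := by
  have : IsFiniteMeasure (volume.restrict (Ioc a b)) := by
    rw [isFiniteMeasure_restrict]; simp
  simpa [intervalIntegral.integral_of_le hab, hab] using
    sq_integral_le_measureReal_mul_integral_sq hu

theorem div_le_add_mul_sq_add {k L I A y : ℝ} (hk : 0 ≤ k) (hL : 0 < L) (hA : A ^ 2 ≤ L * I) :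
    k * y ^ 2 / (1 + k * L) ≤ I + k * (y + A) ^ 2 := by
  have hkL : 0 < 1 + k * L := by positivity
  -- `(1 + kL)(I + k(y + A)²) - ky² = ((1 + kL)A + kLy)² / L + (1 + kL)(I - A² / L)`
  rw [div_le_iff₀ hkL]
  nlinarith [sq_nonneg ((1 + k * L) * A + k * L * y), mul_nonneg hkL.le (sub_nonneg.2 hA),
    mul_nonneg hk hL.le, sq_nonneg (y + A), sq_nonneg A]

/-- `J(τ,y;u)` for Problem (C) with terminal weight `k = h(τ)`. -/
noncomputable def cost (τ T k y : ℝ) (u : ℝ → ℝ) : ℝ :=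
  (∫ s in τ..T, u s ^ 2) + k * (y + ∫ s in τ..T, u s) ^ 2

theorem cost_const (τ T k y c : ℝ) :
    cost τ T k y (fun _ => c) = (T - τ) * c ^ 2 + k * (y + (T - τ) * c) ^ 2 := by
  simp [cost]

theorem isLeast_cost {τ T k : ℝ} (hτT : τ < T) (hk : 0 ≤ k) (y : ℝ) :
    IsLeast {J | ∃ u : ℝ → ℝ, MemLp u 2 (volume.restrict (Ioc τ T)) ∧ J = cost τ T k y u}
      (k * y ^ 2 / (1 + k * (T - τ))) := by
  have hkL : 0 < 1 + k * (T - τ) := by nlinarith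
  constructor
  · refine ⟨fun _ => -(k * y) / (1 + k * (T - τ)), memLp_const _, ?_⟩
    rw [cost_const]
    field_simp
    ring
  · rintro J ⟨u, hu, rfl⟩
    exact div_le_add_mul_sq_add hk (sub_pos.2 hτT)
      (sq_integral_le_mul_integral_sq_Ioc hτT.le hu)

theorem stmt_17_general (T δ : ℝ) (hδ : 0 < δ)
    (h : ℝ → ℝ) (hh : ∀ s ∈ Icc (0:ℝ) T, δ ≤ h s)
    (t τ x : ℝ) (ht : 0 ≤ t) (htτ : t < τ) (hτT : τ < T) :
    ((∫ _s in τ..T, (-(x * h t) / (1 + h t * (T - t))) ^ 2)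
        + h τ * ((x * (1 + h t * (T - τ)) / (1 + h t * (T - t)))
            + ∫ _s in τ..T, -(x * h t) / (1 + h t * (T - t))) ^ 2)
      - sInf {J : ℝ | ∃ u : ℝ → ℝ, MemLp u 2 (volume.restrict (Ioc τ T)) ∧
          J = (∫ s in τ..T, (u s) ^ 2)
            + h τ * ((x * (1 + h t * (T - τ)) / (1 + h t * (T - t)))
                + ∫ s in τ..T, u s) ^ 2}
      = x ^ 2 * (h τ - h t) ^ 2 * (T - τ)
          / ((1 + h τ * (T - τ)) * (1 + h t * (T - t)) ^ 2) ∧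
    (x ≠ 0 → h τ ≠ h t →
      0 < x ^ 2 * (h τ - h t) ^ 2 * (T - τ)
          / ((1 + h τ * (T - τ)) * (1 + h t * (T - t)) ^ 2)) := by
  have hLτ : 0 < T - τ := sub_pos.2 hτT
  have hht : 0 < h t := hδ.trans_le (hh t ⟨ht, by linarith⟩)
  have hhτ : 0 < h τ := hδ.trans_le (hh τ ⟨by linarith, hτT.le⟩)
  have hLt : 0 < 1 + h t * (T - t) := by nlinarith
  refine ⟨?_, fun hx hne => ?_⟩
  · set y := x * (1 + h t * (T - τ)) / (1 + h t * (T - t)) with hy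
    change cost τ T (h τ) y (fun _ => -(x * h t) / (1 + h t * (T - t)))
      - sInf {J | ∃ u : ℝ → ℝ, MemLp u 2 (volume.restrict (Ioc τ T)) ∧ J = cost τ T (h τ) y u} = _
    rw [(isLeast_cost hτT hhτ.le y).csInf_eq, cost_const, hy]
    have : 1 + (T - τ) * h τ ≠ 0 := by positivity
    field_simp
    ring
  · have := sub_ne_zero.2 hne
    positivity

/-- time-inconsistency of Problem (C).  With
`ū ≡ −xh(t)/(1+h(t)(T−t))` and `y = x(1+h(t)(T−τ))/(1+h(t)(T−t))`, the excess of the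
cost `J(τ,y;ū|_{[τ,T]})` over `inf_u J(τ,y;u)` equals
`x²(h(τ)−h(t))²(T−τ)/([1+h(τ)(T−τ)][1+h(t)(T−t)]²)`, which is strictly positive
whenever `x ≠ 0` and `h(τ) ≠ h(t)`. -/
theorem stmt_17 (T δ : ℝ) (hT : 0 < T) (hδ : 0 < δ)
    (h : ℝ → ℝ) (hh : ∀ s ∈ Icc (0:ℝ) T, δ ≤ h s)
    (t τ x : ℝ) (ht : 0 ≤ t) (htτ : t < τ) (hτT : τ < T) :
    ((∫ _s in τ..T, (-(x * h t) / (1 + h t * (T - t))) ^ 2)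
        + h τ * ((x * (1 + h t * (T - τ)) / (1 + h t * (T - t)))
            + ∫ _s in τ..T, -(x * h t) / (1 + h t * (T - t))) ^ 2)
      - sInf {J : ℝ | ∃ u : ℝ → ℝ, MemLp u 2 (volume.restrict (Ioc τ T)) ∧
          J = (∫ s in τ..T, (u s) ^ 2)
            + h τ * ((x * (1 + h t * (T - τ)) / (1 + h t * (T - t)))
                + ∫ s in τ..T, u s) ^ 2}
      = x ^ 2 * (h τ - h t) ^ 2 * (T - τ)
          / ((1 + h τ * (T - τ)) * (1 + h t * (T - t)) ^ 2) ∧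
    (x ≠ 0 → h τ ≠ h t →
      0 < x ^ 2 * (h τ - h t) ^ 2 * (T - τ)
          / ((1 + h τ * (T - τ)) * (1 + h t * (T - t)) ^ 2)) :=
  stmt_17_general T δ hδ h hh t τ x ht htτ hτT
end
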